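/- (Correctness of the channel-gain estimator in the noiseless case.) Let N be a positive integer, s ∈ ℂ^N, p ∈ ℝ^N with p_j ≥ 0, g ∈ ℂ, and let a, d ∈ ℂ^N be unit-modulus vectors. For each m define x_m(i) = (1/√N) Σ_{j} U_j(i,m) √(p_j) s_j and y_m = d_m · g · (Σ_i a_i x_m(i)). Fix n ∈ {0,…,N−1} with s_n ≠ 0, and set c = Σ_{m} (Σ_i conj(a_i) conj(U_n(i,m))) · conj(d_m) · y_m (the combiner with unit gain estimate ĝ = 1). Then the estimate ĝ = c / (√N · s_n) satisfies ĝ = g · √(p_n), i.e., the estimator recovers the complex channel gain scaled by √(p_n). -/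

import Mathlib

open Matrix Complex Finset

/-- The normalized `N × N` DFT matrix: `U i j = ω^(i*j) / √N` with `ω = exp(2πi/N)`. -/
noncomputable def dftU (N : ℕ) : Matrix (Fin N) (Fin N) ℂ :=
  fun i j => Complex.exp (2 * Real.pi * Complex.I / (N : ℂ)) ^ (i.val * j.val) / (Real.sqrt N : ℂ)

/-- The `n`-th circulant-permutation DFT (CP-DFT) matrix:
`U_n i j = U i ((j + n) mod N)`, where addition in `Fin N` is modulo `N`. -/
noncomputable def cpdft (N : ℕ) (n : Fin N) : Matrix (Fin N) (Fin N) ℂ :=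
  fun i j => dftU N i (j + n)


/-
Each CP-DFT matrix factors as `U_u = diag(√N · U(·, u)) · U`. Right multiplication by the unitary
`U` preserves inner products, so, once the unit-modulus factors `|a_i|² = 1` drop out, the
effective codewords `a ᵥ* U_u` have Gram matrix `N · UᴴU = N · 1`. The combiner cancels the
unit-modulus phases `d_m` and projects the received superposition onto the `n`-th codeword, which
leaves `g · √N · √(p_n) · s_n`.
-/

lemma conj_mul_self_of_norm_eq_one {z : ℂ} (hz : ‖z‖ = 1) : (starRingEnd ℂ) z * z = 1 := by
  rw [Complex.conj_mul', hz, Complex.ofReal_one, one_pow]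

lemma ofReal_sqrt_natCast_mul_self (N : ℕ) : (Real.sqrt N : ℂ) * Real.sqrt N = N := by
  rw [← Complex.ofReal_mul, Real.mul_self_sqrt N.cast_nonneg, Complex.ofReal_natCast]

lemma star_vecMul_dotProduct_vecMul {ι R : Type*} [Fintype ι] [DecidableEq ι] [CommSemiring R]
    [StarRing R] {U : Matrix ι ι R} (hU : U * Uᴴ = 1) (v w : ι → R) :
    star (v ᵥ* U) ⬝ᵥ (w ᵥ* U) = star v ⬝ᵥ w := by
  rw [star_vecMul, dotProduct_comm, ← dotProduct_mulVec, mulVec_mulVec, hU, one_mulVec,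
    dotProduct_comm]

lemma dftU_conjTranspose_mul_self (N : ℕ) : (dftU N)ᴴ * dftU N = 1 := by
  ext k l
  have hN : N ≠ 0 := k.pos.ne'
  set ζ := Complex.exp (2 * Real.pi * Complex.I / (N : ℂ))
  have hζ : IsPrimitiveRoot ζ N := Complex.isPrimitiveRoot_exp N hN
  have hζ1 : (starRingEnd ℂ) ζ * ζ = 1 := conj_mul_self_of_norm_eq_one (hζ.norm'_eq_one hN)
  set r := (starRingEnd ℂ) ζ ^ k.val * ζ ^ l.val
  have hterm : ∀ i : Fin N, star (dftU N i k) * dftU N i l = r ^ i.val / N := by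
    intro i
    simp only [dftU, star_div₀, star_pow, Complex.star_def, Complex.conj_ofReal]
    rw [div_mul_div_comm, ofReal_sqrt_natCast_mul_self, mul_pow, ← pow_mul, ← pow_mul,
      mul_comm k.val, mul_comm l.val]
  simp only [mul_apply, conjTranspose_apply, hterm, ← Finset.sum_div,
    Fin.sum_univ_eq_sum_range (r ^ ·)]
  rw [one_apply]
  split_ifs with hkl
  · subst hkl
    have hr : r = 1 := by simp only [r, ← mul_pow, hζ1, one_pow]
    simp [hr, hN]
  · -- `r ≠ 1` is an `N`-th root of unity, so its geometric sum vanishes.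
    have hr : r ≠ 1 := fun hr => hkl <| Fin.ext <| hζ.pow_inj k.isLt l.isLt <| by
      calc ζ ^ k.val = ζ ^ k.val * r := by rw [hr, mul_one]
        _ = ((starRingEnd ℂ) ζ * ζ) ^ k.val * ζ ^ l.val := by ring
        _ = ζ ^ l.val := by rw [hζ1, one_pow, one_mul]
    have hrN : r ^ N = 1 := by
      rw [mul_pow, ← pow_mul, ← pow_mul, mul_comm _ N, mul_comm _ N, pow_mul, pow_mul, ← map_pow,
        hζ.pow_eq_one, map_one, one_pow, one_pow, one_mul]
    rw [geom_sum_eq hr, hrN, sub_self, zero_div, zero_div]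

lemma dftU_mul_conjTranspose_self (N : ℕ) : dftU N * (dftU N)ᴴ = 1 :=
  mul_eq_one_comm.mp (dftU_conjTranspose_mul_self N)

section CPDFT

variable {N : ℕ}

lemma cpdft_apply (u i m : Fin N) :
    cpdft N u i m = Real.sqrt N * dftU N i u * dftU N i m := by
  have hN : N ≠ 0 := i.pos.ne'
  have hζ := Complex.isPrimitiveRoot_exp N hN
  have hperiod : (Complex.exp (2 * Real.pi * Complex.I / N) ^ i.val) ^ N = 1 := by
    rw [pow_right_comm, hζ.pow_eq_one, one_pow]
  simp only [cpdft, dftU]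
  rw [Fin.val_add, pow_mul, ← pow_eq_pow_mod _ hperiod, pow_add, ← pow_mul, ← pow_mul]
  field_simp

lemma cpdft_eq_diagonal_mul (u : Fin N) :
    cpdft N u = diagonal (fun i => Real.sqrt N * dftU N i u) * dftU N := by
  ext i m
  rw [cpdft_apply, diagonal_mul]

lemma star_vecMul_cpdft_dotProduct_vecMul_cpdft {a : Fin N → ℂ} (ha : ∀ i, ‖a i‖ = 1)
    (k l : Fin N) :
    star (a ᵥ* cpdft N k) ⬝ᵥ (a ᵥ* cpdft N l) = if k = l then (N : ℂ) else 0 := by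
  have horth : ∑ i, star (dftU N i k) * dftU N i l = if k = l then 1 else 0 := by
    simpa only [mul_apply, conjTranspose_apply, one_apply] using
      congrFun (congrFun (dftU_conjTranspose_mul_self N) k) l
  rw [cpdft_eq_diagonal_mul, cpdft_eq_diagonal_mul, ← vecMul_vecMul, ← vecMul_vecMul,
    star_vecMul_dotProduct_vecMul (dftU_mul_conjTranspose_self N)]
  calc star (a ᵥ* diagonal fun i => Real.sqrt N * dftU N i k) ⬝ᵥ
        (a ᵥ* diagonal fun i => Real.sqrt N * dftU N i l)
      = N * ∑ i, star (dftU N i k) * dftU N i l := by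
        simp only [vecMul_diagonal, dotProduct, Pi.star_apply, mul_sum, star_mul',
          Complex.star_def, Complex.conj_ofReal]
        refine sum_congr rfl fun i _ => ?_
        set e := (starRingEnd ℂ) (dftU N i k) * dftU N i l
        linear_combination N * e * conj_mul_self_of_norm_eq_one (ha i)
          + (starRingEnd ℂ) (a i) * a i * e * ofReal_sqrt_natCast_mul_self N
    _ = if k = l then (N : ℂ) else 0 := by rw [horth, mul_ite, mul_one, mul_zero]

end CPDFT

lemma sum_star_mul_conj_mul_phase_mul {ι : Type*} [Fintype ι] {d : ι → ℂ} (hd : ∀ m, ‖d m‖ = 1)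
    (g : ℂ) (f v : ι → ℂ) :
    ∑ m, star (f m) * (starRingEnd ℂ) (d m) * (d m * g * v m) = g * (star f ⬝ᵥ v) := by
  simp only [dotProduct, mul_sum, Pi.star_apply]
  refine sum_congr rfl fun m _ => ?_
  linear_combination (g * star (f m) * v m) * conj_mul_self_of_norm_eq_one (hd m)

theorem channel_gain_estimator_correct_general (N : ℕ)
    (s : Fin N → ℂ) (p : Fin N → ℝ) (g : ℂ)
    (a d : Fin N → ℂ) (ha : ∀ i, ‖a i‖ = 1) (hd : ∀ m, ‖d m‖ = 1)
    (x : Fin N → Fin N → ℂ)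
    (hx : ∀ m i, x m i =
      (1 / (Real.sqrt N : ℂ)) * ∑ j, cpdft N j i m * (Real.sqrt (p j) : ℂ) * s j)
    (y : Fin N → ℂ)
    (hy : ∀ m, y m = d m * g * ∑ i, a i * x m i)
    (n : Fin N) (hs : s n ≠ 0)
    (c : ℂ)
    (hc : c = ∑ m,
      (∑ i, (starRingEnd ℂ) (a i) * (starRingEnd ℂ) (cpdft N n i m)) *
        (starRingEnd ℂ) (d m) * y m) :
    c / ((Real.sqrt N : ℂ) * s n) = g * (Real.sqrt (p n) : ℂ) := by
  set w : Fin N → Fin N → ℂ := fun j => a ᵥ* cpdft N j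
  have hsignal : (fun m => ∑ i, a i * x m i) =
      (Real.sqrt N : ℂ)⁻¹ • ∑ j, (Real.sqrt (p j) * s j : ℂ) • w j := by
    ext m
    simp only [hx, w, vecMul, dotProduct, mul_sum, Pi.smul_apply, Finset.sum_apply, smul_eq_mul]
    rw [sum_comm]
    exact sum_congr rfl fun j _ => sum_congr rfl fun i _ => by ring
  have hfilter : ∀ m, ∑ i, (starRingEnd ℂ) (a i) * (starRingEnd ℂ) (cpdft N n i m) =
      star (w n) m := by
    intro m
    simp only [w, vecMul, dotProduct, Pi.star_apply, star_sum, star_mul', Complex.star_def]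
  have hcombined : c = g * (star (w n) ⬝ᵥ fun m => ∑ i, a i * x m i) := by
    rw [hc, ← sum_star_mul_conj_mul_phase_mul hd]
    simp only [hfilter, hy, Pi.star_apply]
  have hsqrt : (Real.sqrt N : ℂ) ≠ 0 := by simp [n.pos.ne']
  rw [hcombined, hsignal, dotProduct_smul, dotProduct_sum]
  simp only [dotProduct_smul, w, star_vecMul_cpdft_dotProduct_vecMul_cpdft ha, smul_eq_mul,
    mul_ite, mul_zero, sum_ite_eq, mem_univ, if_true]
  field_simp
  rw [sq, ofReal_sqrt_natCast_mul_self]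
  ring

/-- correctness of the channel-gain estimator, noiseless case: with the
unit-gain combiner `c = ∑ m (∑ i, conj (a i) conj (U_n(i,m))) conj (d m) y m` and a pilot
`s n ≠ 0`, the estimate `ĝ = c / (√N · s n)` recovers the channel gain scaled by `√(p n)`:
`ĝ = g · √(p n)`. -/
theorem channel_gain_estimator_correct (N : ℕ) (hN : 0 < N)
    (s : Fin N → ℂ) (p : Fin N → ℝ) (hp : ∀ j, 0 ≤ p j) (g : ℂ)
    (a d : Fin N → ℂ) (ha : ∀ i, ‖a i‖ = 1) (hd : ∀ m, ‖d m‖ = 1)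
    (x : Fin N → Fin N → ℂ)
    (hx : ∀ m i, x m i =
      (1 / (Real.sqrt N : ℂ)) * ∑ j, cpdft N j i m * (Real.sqrt (p j) : ℂ) * s j)
    (y : Fin N → ℂ)
    (hy : ∀ m, y m = d m * g * ∑ i, a i * x m i)
    (n : Fin N) (hs : s n ≠ 0)
    (c : ℂ)
    (hc : c = ∑ m,
      (∑ i, (starRingEnd ℂ) (a i) * (starRingEnd ℂ) (cpdft N n i m)) *
        (starRingEnd ℂ) (d m) * y m) :
    c / ((Real.sqrt N : ℂ) * s n) = g * (Real.sqrt (p n) : ℂ) :=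
  channel_gain_estimator_correct_general N s p g a d ha hd x hx y hy n hs c hc
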